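/- For every real k with 0 ≤ k < 1, the descending Landen identity K(2√k/(1+k)) = (1+k) K(k) holds, where K(k) = ∫₀^{π/2} dθ / sqrt(1 - k² sin²θ) is the complete elliptic integral of the first kind (note that 0 ≤ 2√k/(1+k) < 1). -/

import Mathlib

/-! Substitute `sin φ = (1 + k) sin θ / (1 + k sin² θ)`, which maps `[0, π/2]` onto itself. With
`k₁ = 2√k / (1 + k)` one has `1 - k₁² sin² φ = ((1 - k sin² θ) / (1 + k sin² θ))²` and
`dφ/dθ = (1 + k)(1 - k sin² θ) / ((1 + k sin² θ) √(1 - k² sin² θ))`, so that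
`dφ / √(1 - k₁² sin² φ) = (1 + k) dθ / √(1 - k² sin² θ)`. -/

/-- The complete elliptic integral of the first kind,
`K(k) = ∫₀^{π/2} dθ / sqrt(1 - k² sin²θ)`. -/
noncomputable def ellipticK (k : ℝ) : ℝ :=
  ∫ θ in (0:ℝ)..(Real.pi / 2), 1 / Real.sqrt (1 - k ^ 2 * Real.sin θ ^ 2)

open Real Set intervalIntegral

noncomputable def ellipticKIntegrand (k θ : ℝ) : ℝ := 1 / √(1 - k ^ 2 * sin θ ^ 2)

lemma one_sub_sq_mul_sin_sq_pos {k : ℝ} (hk : k ^ 2 < 1) (θ : ℝ) :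
    0 < 1 - k ^ 2 * sin θ ^ 2 := by
  nlinarith [sin_sq_le_one θ, sq_nonneg k]

lemma continuous_ellipticKIntegrand {k : ℝ} (hk : k ^ 2 < 1) :
    Continuous (ellipticKIntegrand k) :=
  continuous_const.div (by fun_prop) fun θ => (sqrt_pos.2 (one_sub_sq_mul_sin_sq_pos hk θ)).ne'

lemma sq_landenModulus {k : ℝ} (h0 : 0 ≤ k) :
    (2 * √k / (1 + k)) ^ 2 = 4 * k / (1 + k) ^ 2 := by
  rw [div_pow, mul_pow, sq_sqrt h0]
  norm_num

lemma sq_landenModulus_lt_one {k : ℝ} (h0 : 0 ≤ k) (h1 : k < 1) :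
    (2 * √k / (1 + k)) ^ 2 < 1 := by
  rw [sq_landenModulus h0, div_lt_one (by positivity)]
  nlinarith

noncomputable def landenSin (k θ : ℝ) : ℝ := (1 + k) * sin θ / (1 + k * sin θ ^ 2)

noncomputable def landenAngle (k θ : ℝ) : ℝ := arcsin (landenSin k θ)

lemma abs_landenSin_le_one {k : ℝ} (h0 : 0 ≤ k) (h1 : k ≤ 1) (θ : ℝ) :
    |landenSin k θ| ≤ 1 := by
  have hD : 0 < 1 + k * sin θ ^ 2 := by positivity
  have hs := neg_one_le_sin θ
  have hs' := sin_le_one θ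
  rw [landenSin, abs_le, le_div_iff₀ hD, div_le_one hD]
  constructor
  · nlinarith [mul_nonneg (by linarith : 0 ≤ 1 + sin θ) (by nlinarith : 0 ≤ 1 + k * sin θ)]
  · nlinarith [mul_nonneg (by linarith : 0 ≤ 1 - sin θ) (by nlinarith : 0 ≤ 1 - k * sin θ)]

lemma sin_landenAngle {k : ℝ} (h0 : 0 ≤ k) (h1 : k ≤ 1) (θ : ℝ) :
    sin (landenAngle k θ) = landenSin k θ :=
  have h := abs_le.1 (abs_landenSin_le_one h0 h1 θ)
  sin_arcsin h.1 h.2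

lemma landenAngle_zero (k : ℝ) : landenAngle k 0 = 0 := by
  simp [landenAngle, landenSin]

lemma landenAngle_pi_div_two {k : ℝ} (hk : 1 + k ≠ 0) : landenAngle k (π / 2) = π / 2 := by
  simp [landenAngle, landenSin, div_self hk]

lemma one_sub_sq_landenModulus_mul_sin_landenAngle_sq {k : ℝ} (h0 : 0 ≤ k) (h1 : k ≤ 1)
    (θ : ℝ) : 1 - (2 * √k / (1 + k)) ^ 2 * sin (landenAngle k θ) ^ 2
      = ((1 - k * sin θ ^ 2) / (1 + k * sin θ ^ 2)) ^ 2 := by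
  have hD : 0 < 1 + k * sin θ ^ 2 := by positivity
  rw [sin_landenAngle h0 h1, landenSin, sq_landenModulus h0]
  field_simp
  ring

lemma sqrt_one_sub_sq_landenSin {k θ : ℝ} (h0 : 0 ≤ k) (h1 : k ≤ 1) (hθ : 0 ≤ cos θ) :
    √(1 - landenSin k θ ^ 2)
      = cos θ * √(1 - k ^ 2 * sin θ ^ 2) / (1 + k * sin θ ^ 2) := by
  have hD : 0 < 1 + k * sin θ ^ 2 := by positivity
  have hR : 0 ≤ 1 - k ^ 2 * sin θ ^ 2 := by nlinarith [sin_sq_le_one θ]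
  have hsq : (cos θ * √(1 - k ^ 2 * sin θ ^ 2) / (1 + k * sin θ ^ 2)) ^ 2
      = 1 - landenSin k θ ^ 2 := by
    rw [landenSin, div_pow, mul_pow, sq_sqrt hR, cos_sq']
    field_simp
    ring
  rw [← hsq, sqrt_sq (by positivity)]

lemma hasDerivAt_landenSin {k : ℝ} (h0 : 0 ≤ k) (θ : ℝ) :
    HasDerivAt (landenSin k)
      ((1 + k) * cos θ * (1 - k * sin θ ^ 2) / (1 + k * sin θ ^ 2) ^ 2) θ := by
  have hD : 0 < 1 + k * sin θ ^ 2 := by positivity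
  have hnum : HasDerivAt (fun x => (1 + k) * sin x) ((1 + k) * cos θ) θ :=
    (hasDerivAt_sin θ).const_mul _
  have hden : HasDerivAt (fun x => 1 + k * sin x ^ 2) (k * (2 * sin θ * cos θ)) θ := by
    simpa using (((hasDerivAt_sin θ).fun_pow 2).const_mul k).const_add 1
  refine (hnum.div hden hD.ne').congr_deriv ?_
  field_simp
  ring

lemma continuous_landenAngle {k : ℝ} (h0 : 0 ≤ k) : Continuous (landenAngle k) :=
  continuous_arcsin.comp <| Continuous.div (by fun_prop) (by fun_prop) fun θ => by positivity

noncomputable def landenAngleDeriv (k θ : ℝ) : ℝ :=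
  (1 + k) * (1 - k * sin θ ^ 2) / ((1 + k * sin θ ^ 2) * √(1 - k ^ 2 * sin θ ^ 2))

lemma continuous_landenAngleDeriv {k : ℝ} (h0 : 0 ≤ k) (h1 : k < 1) :
    Continuous (landenAngleDeriv k) :=
  Continuous.div (by fun_prop) (by fun_prop) fun θ => by
    have := sqrt_pos.2 (one_sub_sq_mul_sin_sq_pos (by nlinarith : k ^ 2 < 1) θ)
    positivity

lemma hasDerivAt_landenAngle {k θ : ℝ} (h0 : 0 ≤ k) (h1 : k ≤ 1) (hθ : 0 < cos θ) :
    HasDerivAt (landenAngle k) (landenAngleDeriv k θ) θ := by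
  have hD : 0 < 1 + k * sin θ ^ 2 := by positivity
  have hR : 0 < 1 - k ^ 2 * sin θ ^ 2 := by
    nlinarith [sin_sq_add_cos_sq θ, mul_pos hθ hθ, sq_nonneg (sin θ)]
  have hR' := sqrt_pos.2 hR
  have hsqrt := sqrt_one_sub_sq_landenSin h0 h1 hθ.le
  have hgap : 0 < 1 - landenSin k θ ^ 2 :=
    sqrt_pos.1 (by rw [hsqrt]; positivity)
  refine ((hasDerivAt_arcsin (by rintro h; norm_num [h] at hgap)
    (by rintro h; norm_num [h] at hgap)).comp θ (hasDerivAt_landenSin h0 θ)).congr_deriv ?_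
  rw [landenAngleDeriv, hsqrt]
  field_simp

lemma landenAngleDeriv_mul_ellipticKIntegrand {k : ℝ} (h0 : 0 ≤ k) (h1 : k < 1) (θ : ℝ) :
    landenAngleDeriv k θ * ellipticKIntegrand (2 * √k / (1 + k)) (landenAngle k θ)
      = (1 + k) * ellipticKIntegrand k θ := by
  have hD : 0 < 1 + k * sin θ ^ 2 := by positivity
  have hN : 0 < 1 - k * sin θ ^ 2 := by nlinarith [sin_sq_le_one θ]
  rw [landenAngleDeriv, ellipticKIntegrand, ellipticKIntegrand,
    one_sub_sq_landenModulus_mul_sin_landenAngle_sq h0 h1.le, sqrt_sq (by positivity)]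
  field_simp

/-- The descending Landen identity `K(2√k/(1+k)) = (1+k) K(k)` for `0 ≤ k < 1`. -/
theorem ellipticK_landen (k : ℝ) (h0 : 0 ≤ k) (h1 : k < 1) :
    ellipticK (2 * Real.sqrt k / (1 + k)) = (1 + k) * ellipticK k := by
  have hpi : (0:ℝ) ≤ π / 2 := by positivity
  have hsub := integral_comp_mul_deriv'' (f := landenAngle k) (f' := landenAngleDeriv k)
    (continuous_landenAngle h0).continuousOn
    (fun θ hθ => by
      rw [min_eq_left hpi, max_eq_right hpi] at hθ
      exact (hasDerivAt_landenAngle h0 h1.le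
        (cos_pos_of_mem_Ioo ⟨by linarith [hθ.1], hθ.2⟩)).hasDerivWithinAt)
    (continuous_landenAngleDeriv h0 h1).continuousOn
    (continuous_ellipticKIntegrand (sq_landenModulus_lt_one h0 h1)).continuousOn
  rw [landenAngle_zero, landenAngle_pi_div_two (by linarith)] at hsub
  calc ellipticK (2 * √k / (1 + k))
      = ∫ φ in 0..π / 2, ellipticKIntegrand (2 * √k / (1 + k)) φ := rfl
    _ = ∫ θ in 0..π / 2, (1 + k) * ellipticKIntegrand k θ := by
      rw [← hsub]
      congr 1 with θ
      rw [Function.comp_apply, mul_comm, landenAngleDeriv_mul_ellipticKIntegrand h0 h1]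
    _ = (1 + k) * ellipticK k := integral_const_mul _ _
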